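/- Any two increasing homeomorphisms of the real line with no fixed points, both satisfying f(x) > x for all x (or both f(x) < x for all x), are topologically conjugate. -/

import Mathlib

/-!
An order automorphism `e` of `ℝ` (automatically a homeomorphism) with `x < e x` is conjugate
to `t ↦ t + 1`: the orbit
`(e ^ n) 0` increases and cannot converge at either end, since a limit would be a fixed point,
so the intervals `[(e ^ n) 0, (e ^ (n + 1)) 0)` tile the line. Sending `[n, n + 1)` affinely
onto `[0, e 0)` and then by `e ^ n` onto the `n`-th tile gives the conjugacy. Two such maps are
then conjugate through translation, and the case `e x < x` reduces to this one by passing to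
inverses.
-/

open Filter Topology

section Orbit

variable {α : Type*} [ConditionallyCompleteLinearOrder α] [TopologicalSpace α] [OrderTopology α]
  {f : α → α} {u : ℤ → α}

theorem Monotone.tendsto_atTop_atTop_of_orbit (hu : Monotone u) (hf : Continuous f)
    (hfix : ∀ x, f x ≠ x) (hsucc : ∀ n, u (n + 1) = f (u n)) : Tendsto u atTop atTop := by
  -- otherwise `u` converges, and its limit is a fixed point of `f`
  refine (tendsto_atTop_of_monotone hu).resolve_right ?_
  rintro ⟨l, hl⟩
  have hshift : Tendsto (fun n => u (n + 1)) atTop (𝓝 l) :=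
    hl.comp (tendsto_atTop_add_const_right _ 1 tendsto_id)
  have himage : Tendsto (fun n => u (n + 1)) atTop (𝓝 (f l)) := by
    simpa only [hsucc, Function.comp_def] using (hf.tendsto l).comp hl
  exact hfix l (tendsto_nhds_unique himage hshift)

theorem Monotone.tendsto_atBot_atBot_of_orbit (hu : Monotone u) (hf : Continuous f)
    (hfix : ∀ x, f x ≠ x) (hsucc : ∀ n, u (n + 1) = f (u n)) : Tendsto u atBot atBot := by
  refine (tendsto_atBot_of_monotone hu).resolve_right ?_
  rintro ⟨l, hl⟩
  have hshift : Tendsto (fun n => u (n + 1)) atBot (𝓝 l) :=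
    hl.comp (tendsto_atBot_add_const_right _ 1 tendsto_id)
  have himage : Tendsto (fun n => u (n + 1)) atBot (𝓝 (f l)) := by
    simpa only [hsucc, Function.comp_def] using (hf.tendsto l).comp hl
  exact hfix l (tendsto_nhds_unique himage hshift)

end Orbit

theorem exists_le_lt_succ_of_tendsto {α : Type*} [LinearOrder α] [NoMaxOrder α] [NoMinOrder α]
    {u : ℤ → α} (htop : Tendsto u atTop atTop) (hbot : Tendsto u atBot atBot) (x : α) :
    ∃ n, u n ≤ x ∧ x < u (n + 1) := by
  obtain ⟨N, hN⟩ := eventually_atTop.mp (htop.eventually_gt_atTop x)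
  obtain ⟨n, hn, hmax⟩ := Int.exists_greatest_of_bdd (P := fun n => u n ≤ x)
    ⟨N, fun m hm => le_of_not_gt fun hNm => (hN m hNm.le).not_ge hm⟩
    (hbot.eventually_le_atBot x).exists
  exact ⟨n, hn, lt_of_not_ge fun h => (hmax (n + 1) h).not_gt (lt_add_one n)⟩

namespace OrderIso

section Preorder

variable {α : Type*} [Preorder α] (e : α ≃o α)

theorem zpow_add_one_apply (n : ℤ) (x : α) : (e ^ (n + 1)) x = e ((e ^ n) x) := by
  rw [add_comm, zpow_one_add, RelIso.mul_apply]

theorem zpow_add_one_apply' (n : ℤ) (x : α) : (e ^ (n + 1)) x = (e ^ n) (e x) := by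
  rw [zpow_add_one, RelIso.mul_apply]

variable {e}

theorem strictMono_zpow_apply (he : ∀ x, x < e x) (x : α) : StrictMono fun n : ℤ => (e ^ n) x :=
  strictMono_int_of_lt_succ fun n => by simpa only [zpow_add_one_apply] using he _

end Preorder

variable {e : ℝ ≃o ℝ}

/-- For `e` above the diagonal this is the inverse of a conjugacy from `e` to `· + 1`,
built from the affine map of `[0, 1)` onto the fundamental domain `[0, e 0)`. -/
noncomputable def translationChart (e : ℝ ≃o ℝ) (t : ℝ) : ℝ :=
  (e ^ ⌊t⌋) (Int.fract t * e 0)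

theorem translationChart_add_one (e : ℝ ≃o ℝ) (t : ℝ) :
    translationChart e (t + 1) = e (translationChart e t) := by
  simp only [translationChart, Int.floor_add_one, Int.fract_add_one, zpow_add_one_apply]

theorem translationChart_mem_Ico (he : ∀ x, x < e x) (t : ℝ) :
    translationChart e t ∈ Set.Ico ((e ^ ⌊t⌋) 0) ((e ^ (⌊t⌋ + 1)) 0) := by
  have he0 : 0 < e 0 := he 0
  rw [zpow_add_one_apply']
  exact ⟨(e ^ ⌊t⌋).monotone (mul_nonneg (Int.fract_nonneg t) he0.le),
    (e ^ ⌊t⌋).strictMono (mul_lt_of_lt_one_left he0 (Int.fract_lt_one t))⟩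

theorem strictMono_translationChart (he : ∀ x, x < e x) : StrictMono (translationChart e) := by
  intro t s hts
  rcases (Int.floor_mono hts.le).eq_or_lt with hfloor | hfloor
  · have hfract : Int.fract t < Int.fract s := by
      simpa only [Int.fract, hfloor, sub_lt_sub_iff_right] using hts
    simp only [translationChart, hfloor]
    exact (e ^ ⌊s⌋).strictMono (mul_lt_mul_of_pos_right hfract (he 0))
  · calc translationChart e t < (e ^ (⌊t⌋ + 1)) 0 := (translationChart_mem_Ico he t).2
      _ ≤ (e ^ ⌊s⌋) 0 := (strictMono_zpow_apply he 0).monotone hfloor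
      _ ≤ translationChart e s := (translationChart_mem_Ico he s).1

theorem surjective_translationChart (he : ∀ x, x < e x) :
    Function.Surjective (translationChart e) := by
  intro x
  have hmono := (strictMono_zpow_apply he 0).monotone
  have hsucc (n : ℤ) : (e ^ (n + 1)) 0 = e ((e ^ n) 0) := zpow_add_one_apply e n 0
  have hfix (y : ℝ) : e y ≠ y := (he y).ne'
  obtain ⟨n, hn, hn'⟩ := exists_le_lt_succ_of_tendsto
    (hmono.tendsto_atTop_atTop_of_orbit e.continuous hfix hsucc)
    (hmono.tendsto_atBot_atBot_of_orbit e.continuous hfix hsucc) x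
  set y := (e ^ n)⁻¹ x
  have he0 : 0 < e 0 := he 0
  have hy0 : 0 ≤ y := (e ^ n).le_symm_apply.mpr hn
  have hy1 : y < e 0 := (e ^ n).symm_apply_lt.mpr (by rwa [← zpow_add_one_apply'])
  have hy : y / e 0 ∈ Set.Ico 0 1 := ⟨div_nonneg hy0 he0.le, (div_lt_one he0).mpr hy1⟩
  refine ⟨n + y / e 0, ?_⟩
  rw [translationChart, Int.floor_intCast_add, Int.fract_intCast_add, Int.floor_eq_zero_iff.mpr hy,
    Int.fract_eq_self.mpr hy, add_zero, div_mul_cancel₀ _ he0.ne', RelIso.apply_inv_self]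

theorem exists_conj_add_one (he : ∀ x, x < e x) : ∃ φ : ℝ ≃o ℝ, ∀ t, φ (t + 1) = e (φ t) :=
  ⟨StrictMono.orderIsoOfSurjective _ (strictMono_translationChart he)
    (surjective_translationChart he), translationChart_add_one e⟩

theorem exists_conj_of_lt_apply {e e' : ℝ ≃o ℝ} (he : ∀ x, x < e x) (he' : ∀ x, x < e' x) :
    ∃ φ : ℝ ≃o ℝ, ∀ x, φ (e x) = e' (φ x) := by
  obtain ⟨ψ, hψ⟩ := exists_conj_add_one he
  obtain ⟨ψ', hψ'⟩ := exists_conj_add_one he'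
  refine ⟨ψ.symm.trans ψ', fun x => ?_⟩
  obtain ⟨t, rfl⟩ := ψ.surjective x
  simp only [trans_apply, ← hψ, symm_apply_apply, hψ']

theorem exists_conj_of_apply_lt {e e' : ℝ ≃o ℝ} (he : ∀ x, e x < x) (he' : ∀ x, e' x < x) :
    ∃ φ : ℝ ≃o ℝ, ∀ x, φ (e x) = e' (φ x) := by
  obtain ⟨φ, hφ⟩ := exists_conj_of_lt_apply (e := e.symm) (e' := e'.symm)
    (fun x => by simpa only [apply_symm_apply] using he (e.symm x))
    (fun x => by simpa only [apply_symm_apply] using he' (e'.symm x))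
  refine ⟨φ, fun x => ?_⟩
  have hx := hφ (e x)
  rw [symm_apply_apply] at hx
  rw [hx, apply_symm_apply]

end OrderIso

theorem stmt_8_general
    (f g : ℝ → ℝ)
    (hfm : StrictMono f) (hfb : Function.Bijective f)
    (hgm : StrictMono g) (hgb : Function.Bijective g)
    (hside : ((∀ x, x < f x) ∧ (∀ x, x < g x)) ∨ ((∀ x, f x < x) ∧ (∀ x, g x < x))) :
    ∃ h : ℝ → ℝ, Continuous h ∧ Function.Bijective h ∧ ∀ x, h (f x) = g (h x) := by
  let F := hfm.orderIsoOfSurjective f hfb.2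
  let G := hgm.orderIsoOfSurjective g hgb.2
  obtain ⟨φ, hφ⟩ : ∃ φ : ℝ ≃o ℝ, ∀ x, φ (F x) = G (φ x) := by
    rcases hside with ⟨hf, hg⟩ | ⟨hf, hg⟩
    · exact OrderIso.exists_conj_of_lt_apply hf hg
    · exact OrderIso.exists_conj_of_apply_lt hf hg
  exact ⟨φ, φ.continuous, φ.bijective, hφ⟩

/-- two increasing fixed-point-free homeomorphisms of the real line,
both above the diagonal (or both below the diagonal), are topologically conjugate. -/
theorem stmt_8
    (f g : ℝ → ℝ)
    (hfc : Continuous f) (hfm : StrictMono f) (hfb : Function.Bijective f)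
    (hgc : Continuous g) (hgm : StrictMono g) (hgb : Function.Bijective g)
    (hside : ((∀ x, x < f x) ∧ (∀ x, x < g x)) ∨ ((∀ x, f x < x) ∧ (∀ x, g x < x))) :
    ∃ h : ℝ → ℝ, Continuous h ∧ Function.Bijective h ∧ ∀ x, h (f x) = g (h x) :=
  stmt_8_general f g hfm hfb hgm hgb hside
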